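/- In the mixed HK model with αᵢ(t) ∈ [0,1], for all m ≥ 1 one has 4 Σ_{t=0}^{m-1} Σ_{i=1}^n ‖xᵢ(t) - xᵢ(t+1)‖² < n² ε², i.e., the total squared displacement over all time is bounded by n²ε²/4. -/

import Mathlib

/-! The truncated energy `Z(c) = Σᵢⱼ min(‖cᵢ - cⱼ‖², ε²)` drops by at least
`4 Σᵢ ‖xᵢ(t) - xᵢ(t+1)‖²` at every step, so telescoping bounds the total displacement by
`Z(x(0)) < n²ε²`. For one step, freeze the neighbourhood graph of time `t`: pairs outside it
contribute `ε²` before and at most `ε²` after, and on the (symmetric, reflexive) graph the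
quadratic energy `Σᵢ Σ_{j ∈ Nᵢ} ‖cᵢ - cⱼ‖²` decreases. Indeed, with `δᵢ = (1 - αᵢ) uᵢ` the
displacement and `uᵢ` the pull towards the local mean, the cross term of the expansion is
`-4 Σᵢ |Nᵢ| ⟪uᵢ, δᵢ⟫`, the quadratic term is at most `4 Σᵢ (|Nᵢ| - 1) ‖δᵢ‖²`, and
`‖δᵢ‖² ≤ ⟪uᵢ, δᵢ⟫` because `1 - αᵢ ∈ [0, 1]`. -/

open Finset
open scoped RealInnerProductSpace

variable {ι E : Type*}

noncomputable def mixedHKStep [AddCommGroup E] [Module ℝ E]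
    (Nb : ι → Finset ι) (α : ι → ℝ) (a : ι → E) (i : ι) : E :=
  α i • a i + ((1 - α i) / (#(Nb i) : ℝ)) • ∑ j ∈ Nb i, a j

lemma sum_norm_sub_sq_le [NormedAddCommGroup E] [InnerProductSpace ℝ E] [DecidableEq ι]
    {s : Finset ι} {i : ι} (hi : i ∈ s) (v : ι → E) :
    ∑ j ∈ s, ‖v i - v j‖ ^ 2 ≤ ∑ j ∈ s, (2 * ‖v i‖ ^ 2 + 2 * ‖v j‖ ^ 2) - 4 * ‖v i‖ ^ 2 := by
  -- the diagonal term is `0` on the left and `4 ‖v i‖²` on the right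
  rw [← add_sum_erase s _ hi, ← add_sum_erase s _ hi, sub_self, norm_zero]
  have hpar : ∀ j, ‖v i - v j‖ ^ 2 ≤ 2 * ‖v i‖ ^ 2 + 2 * ‖v j‖ ^ 2 := fun j => by
    nlinarith [parallelogram_law_with_norm ℝ (v i) (v j), sq_nonneg ‖v i + v j‖]
  have := sum_le_sum fun j (_ : j ∈ s.erase i) => hpar j
  linarith

lemma norm_smul_sq_le_inner_smul [NormedAddCommGroup E] [InnerProductSpace ℝ E]
    {c : ℝ} (hc : c ∈ Set.Icc (0 : ℝ) 1) (u : E) : ‖c • u‖ ^ 2 ≤ ⟪u, c • u⟫ := by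
  rw [norm_smul, real_inner_smul_right, real_inner_self_eq_norm_sq, Real.norm_of_nonneg hc.1]
  have : c * c ≤ c := mul_le_of_le_one_left hc.1 hc.2
  nlinarith [sq_nonneg ‖u‖]

variable [Fintype ι]

lemma sum_sum_swap_of_symm {M : Type*} [AddCommMonoid M] {Nb : ι → Finset ι}
    (hsymm : ∀ i j, j ∈ Nb i ↔ i ∈ Nb j) (f : ι → ι → M) :
    ∑ i, ∑ j ∈ Nb i, f i j = ∑ i, ∑ j ∈ Nb i, f j i :=
  sum_comm' fun i j => by simp [hsymm i j]

section Energies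

variable [NormedAddCommGroup E]

noncomputable def confidenceNbhd (ε : ℝ) (a : ι → E) (i : ι) : Finset ι :=
  univ.filter fun j => ‖a i - a j‖ ≤ ε

def localEnergy (Nb : ι → Finset ι) (c : ι → E) : ℝ :=
  ∑ i, ∑ j ∈ Nb i, ‖c i - c j‖ ^ 2

noncomputable def truncatedEnergy (ε : ℝ) (c : ι → E) : ℝ :=
  ∑ i, ∑ j, min (‖c i - c j‖ ^ 2) (ε ^ 2)

lemma mem_confidenceNbhd_comm (ε : ℝ) (a : ι → E) (i j : ι) :
    j ∈ confidenceNbhd ε a i ↔ i ∈ confidenceNbhd ε a j := by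
  simp [confidenceNbhd, norm_sub_rev (a i)]

lemma self_mem_confidenceNbhd {ε : ℝ} (hε : 0 ≤ ε) (a : ι → E) (i : ι) :
    i ∈ confidenceNbhd ε a i := by
  simp [confidenceNbhd, hε]

lemma truncatedEnergy_nonneg (ε : ℝ) (c : ι → E) : 0 ≤ truncatedEnergy ε c :=
  sum_nonneg fun _ _ => sum_nonneg fun _ _ => le_min (sq_nonneg _) (sq_nonneg _)

lemma truncatedEnergy_lt [Nonempty ι] {ε : ℝ} (hε : 0 < ε) (c : ι → E) :
    truncatedEnergy ε c < (Fintype.card ι : ℝ) ^ 2 * ε ^ 2 := by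
  obtain ⟨i⟩ := ‹Nonempty ι›
  have hdiag : min (‖c i - c i‖ ^ 2) (ε ^ 2) < ε ^ 2 := by simp [hε.ne']
  calc truncatedEnergy ε c < ∑ _i : ι, ∑ _j : ι, ε ^ 2 :=
        sum_lt_sum (fun _ _ => sum_le_sum fun _ _ => min_le_right _ _)
          ⟨i, mem_univ i, sum_lt_sum (fun _ _ => min_le_right _ _) ⟨i, mem_univ i, hdiag⟩⟩
    _ = (Fintype.card ι : ℝ) ^ 2 * ε ^ 2 := by simp [sq, mul_assoc]

lemma truncatedEnergy_le_localEnergy_add [DecidableEq ι] (ε : ℝ) (Nb : ι → Finset ι)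
    (c : ι → E) :
    truncatedEnergy ε c ≤ localEnergy Nb c + ∑ i, ∑ _j ∈ (Nb i)ᶜ, ε ^ 2 := by
  rw [truncatedEnergy, localEnergy, ← sum_add_distrib]
  refine sum_le_sum fun i _ => ?_
  rw [← sum_add_sum_compl (Nb i)]
  exact add_le_add (sum_le_sum fun _ _ => min_le_left _ _)
    (sum_le_sum fun _ _ => min_le_right _ _)

lemma truncatedEnergy_eq_localEnergy_confidenceNbhd_add [DecidableEq ι] {ε : ℝ} (hε : 0 ≤ ε)
    (a : ι → E) :
    truncatedEnergy ε a
      = localEnergy (confidenceNbhd ε a) a + ∑ i, ∑ _j ∈ (confidenceNbhd ε a i)ᶜ, ε ^ 2 := by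
  rw [truncatedEnergy, localEnergy, ← sum_add_distrib]
  refine sum_congr rfl fun i _ => ?_
  rw [← sum_add_sum_compl (confidenceNbhd ε a i)]
  congr 1 <;> refine sum_congr rfl fun j hj => ?_
  · have : ‖a i - a j‖ ≤ ε := by simpa [confidenceNbhd] using hj
    exact min_eq_left (by gcongr)
  · have : ε < ‖a i - a j‖ := by simpa [confidenceNbhd] using hj
    exact min_eq_right (by gcongr)

end Energies

variable [NormedAddCommGroup E] [InnerProductSpace ℝ E]

lemma sum_sum_inner_sub_sub_of_symm {Nb : ι → Finset ι}
    (hsymm : ∀ i j, j ∈ Nb i ↔ i ∈ Nb j) (a δ : ι → E) :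
    ∑ i, ∑ j ∈ Nb i, ⟪a i - a j, δ i - δ j⟫
      = 2 * ∑ i, ⟪∑ j ∈ Nb i, (a i - a j), δ i⟫ := by
  have hswap := sum_sum_swap_of_symm hsymm fun i j => ⟪a i - a j, δ j⟫
  have hneg : ∀ i j, ⟪a j - a i, δ i⟫ = -⟪a i - a j, δ i⟫ := fun i j => by
    rw [← inner_neg_left, neg_sub]
  calc ∑ i, ∑ j ∈ Nb i, ⟪a i - a j, δ i - δ j⟫
      = ∑ i, ∑ j ∈ Nb i, ⟪a i - a j, δ i⟫ - ∑ i, ∑ j ∈ Nb i, ⟪a i - a j, δ j⟫ := by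
        simp only [inner_sub_right, sum_sub_distrib]
    _ = 2 * ∑ i, ∑ j ∈ Nb i, ⟪a i - a j, δ i⟫ := by
        rw [hswap]
        simp only [hneg, sum_neg_distrib]
        ring
    _ = 2 * ∑ i, ⟪∑ j ∈ Nb i, (a i - a j), δ i⟫ := by simp only [sum_inner]

lemma sum_sum_norm_sub_sq_le_of_symm [DecidableEq ι] {Nb : ι → Finset ι}
    (hsymm : ∀ i j, j ∈ Nb i ↔ i ∈ Nb j) (hrefl : ∀ i, i ∈ Nb i) (v : ι → E) :
    ∑ i, ∑ j ∈ Nb i, ‖v i - v j‖ ^ 2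
      ≤ 4 * ∑ i, (#(Nb i) : ℝ) * ‖v i‖ ^ 2 - 4 * ∑ i, ‖v i‖ ^ 2 := by
  have hswap := sum_sum_swap_of_symm hsymm fun i j => 2 * ‖v j‖ ^ 2
  calc ∑ i, ∑ j ∈ Nb i, ‖v i - v j‖ ^ 2
      ≤ ∑ i, (∑ j ∈ Nb i, (2 * ‖v i‖ ^ 2 + 2 * ‖v j‖ ^ 2) - 4 * ‖v i‖ ^ 2) :=
        sum_le_sum fun i _ => sum_norm_sub_sq_le (hrefl i) v
    _ = 4 * ∑ i, (#(Nb i) : ℝ) * ‖v i‖ ^ 2 - 4 * ∑ i, ‖v i‖ ^ 2 := by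
        simp only [sum_sub_distrib, sum_add_distrib, hswap, sum_const, nsmul_eq_mul, mul_sum]
        rw [← sum_add_distrib]
        exact congrArg (· - _) (sum_congr rfl fun i _ => by ring)

lemma localEnergy_mixedHKStep_add_le [DecidableEq ι] {Nb : ι → Finset ι}
    (hsymm : ∀ i j, j ∈ Nb i ↔ i ∈ Nb j) (hrefl : ∀ i, i ∈ Nb i) {α : ι → ℝ}
    (hα : ∀ i, α i ∈ Set.Icc (0 : ℝ) 1) (a : ι → E) :
    localEnergy Nb (mixedHKStep Nb α a) + 4 * ∑ i, ‖a i - mixedHKStep Nb α a i‖ ^ 2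
      ≤ localEnergy Nb a := by
  set b := mixedHKStep Nb α a
  set δ : ι → E := fun i => b i - a i
  set u : ι → E := fun i => (#(Nb i) : ℝ)⁻¹ • ∑ j ∈ Nb i, a j - a i
  have hcard : ∀ i, (#(Nb i) : ℝ) ≠ 0 := fun i => by
    exact_mod_cast (card_pos.mpr ⟨i, hrefl i⟩).ne'
  have hδ : ∀ i, δ i = (1 - α i) • u i := fun i => by
    simp only [δ, u, b, mixedHKStep, div_eq_mul_inv, mul_smul, smul_sub]
    module
  have hdrift : ∀ i, ∑ j ∈ Nb i, (a i - a j) = -((#(Nb i) : ℝ) • u i) := fun i => by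
    simp only [u, sum_sub_distrib, sum_const, smul_sub, smul_inv_smul₀ (hcard i),
      Nat.cast_smul_eq_nsmul]
    abel
  have hexpand : localEnergy Nb b = localEnergy Nb a
      + 2 * ∑ i, ∑ j ∈ Nb i, ⟪a i - a j, δ i - δ j⟫ + ∑ i, ∑ j ∈ Nb i, ‖δ i - δ j‖ ^ 2 := by
    have : ∀ i j, b i - b j = (a i - a j) + (δ i - δ j) := fun i j => by
      simp only [δ]; abel
    simp only [localEnergy, this, norm_add_sq_real, sum_add_distrib, mul_sum]
  have hcross : ∑ i, ∑ j ∈ Nb i, ⟪a i - a j, δ i - δ j⟫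
      = -2 * ∑ i, (#(Nb i) : ℝ) * ⟪u i, δ i⟫ := by
    simp only [sum_sum_inner_sub_sub_of_symm hsymm, hdrift, inner_neg_left, real_inner_smul_left,
      sum_neg_distrib]
    ring
  have hper : ∑ i, (#(Nb i) : ℝ) * ‖δ i‖ ^ 2 ≤ ∑ i, (#(Nb i) : ℝ) * ⟪u i, δ i⟫ := by
    refine sum_le_sum fun i _ => mul_le_mul_of_nonneg_left ?_ (Nat.cast_nonneg _)
    rw [hδ i]
    exact norm_smul_sq_le_inner_smul ⟨by linarith [(hα i).2], by linarith [(hα i).1]⟩ _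
  have hdisp : ∑ i, ‖a i - b i‖ ^ 2 = ∑ i, ‖δ i‖ ^ 2 := by
    simp only [δ, norm_sub_rev]
  rw [hexpand, hcross, hdisp]
  linarith [sum_sum_norm_sub_sq_le_of_symm hsymm hrefl δ]

lemma truncatedEnergy_mixedHKStep_add_le [DecidableEq ι] {ε : ℝ} (hε : 0 ≤ ε) {α : ι → ℝ}
    (hα : ∀ i, α i ∈ Set.Icc (0 : ℝ) 1) (a : ι → E) :
    truncatedEnergy ε (mixedHKStep (confidenceNbhd ε a) α a)
        + 4 * ∑ i, ‖a i - mixedHKStep (confidenceNbhd ε a) α a i‖ ^ 2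
      ≤ truncatedEnergy ε a := by
  rw [truncatedEnergy_eq_localEnergy_confidenceNbhd_add hε a]
  linarith [truncatedEnergy_le_localEnergy_add ε (confidenceNbhd ε a)
      (mixedHKStep (confidenceNbhd ε a) α a),
    localEnergy_mixedHKStep_add_le (mem_confidenceNbhd_comm ε a)
      (self_mem_confidenceNbhd hε a) hα a]

/-- The total squared displacement in the mixed HK model is bounded:
`4 Σ_{t<m} Σᵢ ‖xᵢ(t) - xᵢ(t+1)‖² < n² ε²` for all `m ≥ 1`. -/
theorem mixedHK_total_displacement_bound (n d : ℕ) (hn : 0 < n) (ε : ℝ) (hε : 0 < ε)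
    (x : ℕ → Fin n → EuclideanSpace ℝ (Fin d))
    (α : ℕ → Fin n → ℝ) (hα : ∀ t i, α t i ∈ Set.Icc (0 : ℝ) 1)
    (N : ℕ → Fin n → Finset (Fin n))
    (hN : ∀ t i, N t i = Finset.univ.filter (fun j => ‖x t i - x t j‖ ≤ ε))
    (hupd : ∀ t i, x (t + 1) i
      = α t i • x t i + ((1 - α t i) / ((N t i).card : ℝ)) • ∑ j ∈ N t i, x t j) :
    ∀ m : ℕ, 1 ≤ m →
      4 * ∑ t ∈ Finset.range m, ∑ i : Fin n, ‖x t i - x (t + 1) i‖ ^ 2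
        < (n : ℝ) ^ 2 * ε ^ 2 := by
  intro m _
  have : Nonempty (Fin n) := ⟨⟨0, hn⟩⟩
  have hstep : ∀ t, truncatedEnergy ε (x (t + 1)) + 4 * ∑ i, ‖x t i - x (t + 1) i‖ ^ 2
      ≤ truncatedEnergy ε (x t) := fun t => by
    have hx : x (t + 1) = mixedHKStep (confidenceNbhd ε (x t)) (α t) (x t) :=
      funext fun i => by rw [hupd, hN]; rfl
    rw [hx]
    exact truncatedEnergy_mixedHKStep_add_le hε.le (hα t) (x t)
  calc 4 * ∑ t ∈ Finset.range m, ∑ i : Fin n, ‖x t i - x (t + 1) i‖ ^ 2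
      ≤ truncatedEnergy ε (x 0) - truncatedEnergy ε (x m) := by
        rw [mul_sum, ← sum_range_sub' (fun t => truncatedEnergy ε (x t))]
        exact sum_le_sum fun t _ => by linarith [hstep t]
    _ < (n : ℝ) ^ 2 * ε ^ 2 := by
        have := truncatedEnergy_lt hε (x 0)
        rw [Fintype.card_fin] at this
        linarith [truncatedEnergy_nonneg ε (x m)]
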